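/- Let M be a maximum matching of a finite bipartite graph G = (V, F, E) with coarse decomposition (T_I, T_C, T_O). Then every maximum matching M' of G matches every vertex of T_I ∩ F with a vertex of T_I ∩ V, and matches every vertex of T_O ∩ V with a vertex of T_O ∩ F; in particular, every vertex of T_I ∩ F and every vertex of T_O ∩ V is covered by every maximum matching of G. -/

import Mathlib

variable {F V : Type*} [Fintype F] [Fintype V] [DecidableEq F] [DecidableEq V]

/-- `M` is a matching of the bipartite graph with edge set `E`:
`M ⊆ E` and no two edges of `M` share an endpoint. -/
def IsMatching (E M : Finset (F × V)) : Prop :=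
  M ⊆ E ∧ (∀ e ∈ M, ∀ e' ∈ M, e.1 = e'.1 → e = e') ∧
    ∀ e ∈ M, ∀ e' ∈ M, e.2 = e'.2 → e = e'

/-- `M` is a maximum matching: a matching of greatest cardinality. -/
def IsMaxMatching (E M : Finset (F × V)) : Prop :=
  IsMatching E M ∧ ∀ M' : Finset (F × V), IsMatching E M' → M'.card ≤ M.card

/-- The (symmetric) adjacency relation of the bipartite graph on `F ⊕ V`. -/
def sumAdj (E : Finset (F × V)) : (F ⊕ V) → (F ⊕ V) → Prop
  | Sum.inl f, Sum.inr v => (f, v) ∈ E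
  | Sum.inr v, Sum.inl f => (f, v) ∈ E
  | _, _ => False

/-- The pair of consecutive path vertices forms an edge belonging to `M`. -/
def pairInM (M : Finset (F × V)) : (F ⊕ V) × (F ⊕ V) → Prop
  | (Sum.inl f, Sum.inr v) => (f, v) ∈ M
  | (Sum.inr v, Sum.inl f) => (f, v) ∈ M
  | _ => False

/-- `l` is an `M`-alternating path in the bipartite graph with edge set `E`:
a nonempty sequence of distinct vertices in which consecutive vertices are joined
by edges of `E` lying alternately inside and outside `M`. -/
def IsAltPath (E M : Finset (F × V)) (l : List (F ⊕ V)) : Prop :=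
  l ≠ [] ∧ l.Nodup ∧ l.Chain' (sumAdj E) ∧
    (l.zip l.tail).Chain' fun e e' => pairInM M e ↔ ¬ pairInM M e'

/-- `v ∈ V` is not an endpoint of any edge of `M`. -/
def VUnmatched (M : Finset (F × V)) (v : V) : Prop := ∀ f, (f, v) ∉ M

/-- `f ∈ F` is not an endpoint of any edge of `M`. -/
def FUnmatched (M : Finset (F × V)) (f : F) : Prop := ∀ v, (f, v) ∉ M

/-- The incomplete set `T_I`: all vertices reachable from some `M`-unmatched
vertex of `V` by a (possibly trivial) `M`-alternating path. -/
def incompleteSet (E M : Finset (F × V)) : Set (F ⊕ V) :=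
  {x | ∃ v : V, VUnmatched M v ∧ ∃ l : List (F ⊕ V),
    IsAltPath E M l ∧ l.head? = some (Sum.inr v) ∧ l.getLast? = some x}

/-- The overcomplete set `T_O`: all vertices reachable from some `M`-unmatched
vertex of `F` by a (possibly trivial) `M`-alternating path. -/
def overcompleteSet (E M : Finset (F × V)) : Set (F ⊕ V) :=
  {x | ∃ f : F, FUnmatched M f ∧ ∃ l : List (F ⊕ V),
    IsAltPath E M l ∧ l.head? = some (Sum.inl f) ∧ l.getLast? = some x}

/-- The complete set `T_C = (V ∪ F) \ (T_I ∪ T_O)`. -/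
def completeSet (E M : Finset (F × V)) : Set (F ⊕ V) :=
  Set.univ \ (incompleteSet E M ∪ overcompleteSet E M)

/-!
Every alternating path from an `M`-unmatched vertex of `V` leaves `V` along an edge outside `M`
and leaves `F` along an edge of `M`. Hence `A = T_I ∩ V` contains every `M`-unmatched vertex of
`V`, and every neighbour of `A` lies in `B = T_I ∩ F`. Since `M` is maximum there is no
augmenting path, so `M` matches every vertex of `B`, into `A`. Now count: `M` matches `|B|`
vertices of `A` and leaves the other `|V| - |M|` free, while `M'` can match vertices of `A` only
into `B` and leaves at most `|V| - |M'| = |V| - |M|` vertices of `A` free. So `M'` matches all of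
`B` into `A`. The claim about `T_O` is the claim about `T_I` for the graph with `F` and `V`
exchanged.
-/

open List Sum

section
variable {F V : Type*} {E M : Finset (F × V)}

def AltStep (E M : Finset (F × V)) : F ⊕ V → F ⊕ V → Prop
  | inr v, inl f => (f, v) ∈ E ∧ (f, v) ∉ M
  | inl f, inr v => (f, v) ∈ M
  | _, _ => False

lemma isAltPath_iff {l : List (F ⊕ V)} :
    IsAltPath E M l ↔ l ≠ [] ∧ l.Nodup ∧ l.IsChain (sumAdj E) ∧
      (l.zip l.tail).IsChain fun p q => pairInM M p ↔ ¬ pairInM M q :=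
  Iff.rfl

lemma isRight_iff_not_of_sumAdj {x y : F ⊕ V} (h : sumAdj E x y) :
    x.isRight ↔ ¬ y.isRight := by
  rcases x with _ | _ <;> rcases y with _ | _ <;> simp_all [sumAdj]

lemma altStep_iff (hME : M ⊆ E) {x y : F ⊕ V} :
    AltStep E M x y ↔ sumAdj E x y ∧ (pairInM M (x, y) ↔ y.isRight) := by
  rcases x with f | v <;> rcases y with g | w <;> simp [AltStep, sumAdj, pairInM]
  exact fun h => hME h

lemma isChain_altStep_iff (hME : M ⊆ E) {x y : F ⊕ V} (t : List (F ⊕ V))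
    (hxy : sumAdj E x y → (pairInM M (x, y) ↔ y.isRight)) :
    (x :: y :: t).IsChain (AltStep E M) ↔ (x :: y :: t).IsChain (sumAdj E) ∧
      ((x :: y :: t).zip (y :: t)).IsChain fun p q => pairInM M p ↔ ¬ pairInM M q := by
  induction t generalizing x y with
  | nil => simpa [altStep_iff hME] using hxy
  | cons z t ih =>
    have hstep : AltStep E M x y ↔ sumAdj E x y := by
      rw [altStep_iff hME]; exact ⟨And.left, fun h => ⟨h, hxy h⟩⟩
    -- on a bipartite path, once an edge lies in `M` iff it enters `V`, alternation says the same
    -- of the next edge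
    have hturn : sumAdj E x y → sumAdj E y z →
        ((pairInM M (x, y) ↔ ¬ pairInM M (y, z)) ↔ (pairInM M (y, z) ↔ z.isRight)) :=
      fun h h' => by
        have := isRight_iff_not_of_sumAdj h'
        have := hxy h
        tauto
    simp only [zip_cons_cons, isChain_cons_cons] at ih ⊢
    by_cases hyz : sumAdj E y z → (pairInM M (y, z) ↔ z.isRight)
    · rw [ih hyz, hstep]
      tauto
    · have := (altStep_iff (E := E) (M := M) (x := y) (y := z) hME).1
      tauto

lemma isAltPath_cons_iff (hME : M ⊆ E) {v : V} (hv : VUnmatched M v) (l : List (F ⊕ V)) :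
    IsAltPath E M (inr v :: l) ↔ (inr v :: l).Nodup ∧ (inr v :: l).IsChain (AltStep E M) := by
  rcases l with _ | ⟨y, t⟩
  · simp [isAltPath_iff]
  · have hvy : sumAdj E (inr v) y → (pairInM M (inr v, y) ↔ y.isRight) := by
      rcases y with f | w <;> simp [sumAdj, pairInM, hv _]
    rw [isChain_altStep_iff hME t hvy, isAltPath_iff]
    simp only [ne_eq, reduceCtorEq, not_false_eq_true, true_and, tail_cons]

lemma mem_incompleteSet_iff (hME : M ⊆ E) {x : F ⊕ V} :
    x ∈ incompleteSet E M ↔ ∃ v, VUnmatched M v ∧ ∃ l : List (F ⊕ V),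
      (inr v :: l).Nodup ∧ (inr v :: l).IsChain (AltStep E M) ∧
        (inr v :: l).getLast? = some x := by
  constructor
  · rintro ⟨v, hv, _ | ⟨a, l⟩, hl, hhead, hlast⟩
    · simp at hhead
    · obtain rfl : a = inr v := by simpa using hhead
      exact ⟨v, hv, l, (isAltPath_cons_iff hME hv l).1 hl |>.imp_right (⟨·, hlast⟩)⟩
  · rintro ⟨v, hv, l, hnd, hc, hlast⟩
    exact ⟨v, hv, inr v :: l, (isAltPath_cons_iff hME hv l).2 ⟨hnd, hc⟩, rfl, hlast⟩

lemma mem_incompleteSet_of_mem_path (hME : M ⊆ E) {v : V} (hv : VUnmatched M v)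
    {l : List (F ⊕ V)} (hnd : (inr v :: l).Nodup) (hc : (inr v :: l).IsChain (AltStep E M))
    {y : F ⊕ V} (hy : y ∈ inr v :: l) : y ∈ incompleteSet E M := by
  rw [mem_incompleteSet_iff hME]
  rcases mem_cons.1 hy with rfl | hy
  · exact ⟨v, hv, [], by simp, by simp, rfl⟩
  · obtain ⟨s, t, rfl⟩ := append_of_mem hy
    have hpre : inr v :: (s ++ [y]) <+: inr v :: (s ++ y :: t) := ⟨t, by simp⟩
    exact ⟨v, hv, s ++ [y], hnd.sublist hpre.sublist, hc.prefix hpre,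
      by rw [← cons_append, getLast?_concat]⟩

lemma mem_incompleteSet_of_altStep (hME : M ⊆ E) {x z : F ⊕ V} (hx : x ∈ incompleteSet E M)
    (hxz : AltStep E M x z) : z ∈ incompleteSet E M := by
  obtain ⟨v, hv, l, hnd, hc, hlast⟩ := (mem_incompleteSet_iff hME).1 hx
  by_cases hz : z ∈ inr v :: l
  · exact mem_incompleteSet_of_mem_path hME hv hnd hc hz
  refine (mem_incompleteSet_iff hME).2 ⟨v, hv, l ++ [z], ?_, ?_, ?_⟩ <;> rw [← cons_append]
  · rw [← concat_eq_append]
    exact hnd.concat hz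
  · rw [isChain_append]
    refine ⟨hc, isChain_singleton z, ?_⟩
    simpa [hlast] using hxz
  · exact getLast?_concat

lemma eq_vUnmatched_or_exists_altStep_of_mem_incompleteSet (hME : M ⊆ E) {x : F ⊕ V}
    (hx : x ∈ incompleteSet E M) :
    (∃ v, x = inr v ∧ VUnmatched M v) ∨ ∃ y ∈ incompleteSet E M, AltStep E M y x := by
  obtain ⟨v, hv, l, hnd, hc, hlast⟩ := (mem_incompleteSet_iff hME).1 hx
  rcases eq_nil_or_concat l with rfl | ⟨l, b, rfl⟩
  · exact Or.inl ⟨v, by simpa [eq_comm] using hlast, hv⟩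
  rw [concat_eq_append, ← cons_append] at hnd hc hlast
  obtain rfl : b = x := Option.some.inj (getLast?_concat.symm.trans hlast)
  right
  have hpre : inr v :: l <+: (inr v :: l) ++ [b] := prefix_append _ _
  refine ⟨(inr v :: l).getLast (cons_ne_nil _ _),
    mem_incompleteSet_of_mem_path hME hv (hnd.sublist hpre.sublist) (hc.prefix hpre)
      (getLast_mem _), ?_⟩
  rw [isChain_append] at hc
  exact hc.2.2 _ (getLast?_eq_some_getLast (cons_ne_nil _ _)) _ rfl

lemma IsMatching.subset {K K' : Finset (F × V)} (hK : IsMatching E K) (h : K' ⊆ K) :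
    IsMatching E K' :=
  ⟨h.trans hK.1, fun e he e' he' => hK.2.1 e (h he) e' (h he'),
    fun e he e' he' => hK.2.2 e (h he) e' (h he')⟩

lemma IsMatching.insert_of_unmatched [DecidableEq F] [DecidableEq V] {K : Finset (F × V)}
    (hK : IsMatching E K) {f : F} {v : V} (he : (f, v) ∈ E) (hf : FUnmatched K f)
    (hv : VUnmatched K v) :
    IsMatching E (insert (f, v) K) := by
  obtain ⟨hKE, hfst, hsnd⟩ := hK
  refine ⟨Finset.insert_subset he hKE, ?_, ?_⟩ <;>
  · simp only [Finset.mem_insert, forall_eq_or_imp]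
    grind [FUnmatched, VUnmatched]

lemma IsMatching.fUnmatched_erase [DecidableEq F] [DecidableEq V] {K : Finset (F × V)}
    (hK : IsMatching E K) {f : F} {w : V} (h : (f, w) ∈ K) : FUnmatched (K.erase (f, w)) f :=
  fun _ hu => (Finset.mem_erase.1 hu).1 (hK.2.1 _ (Finset.mem_erase.1 hu).2 _ h rfl)

lemma altStep_congr {K K' : Finset (F × V)} {x y : F ⊕ V}
    (h : ∀ g u, (x = inl g ∨ y = inl g) → ((g, u) ∈ K ↔ (g, u) ∈ K')) :
    AltStep E K x y ↔ AltStep E K' x y := by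
  rcases x with f | v <;> rcases y with g | w <;> simp [AltStep, h]

theorem IsMatching.exists_card_eq_add_one_of_altStep_chain [DecidableEq F] [DecidableEq V] :
    ∀ {l : List (F ⊕ V)} {K : Finset (F × V)} {v : V} {f : F}, IsMatching E K →
      VUnmatched K v → FUnmatched K f → (inr v :: l).Nodup →
      (inr v :: l).IsChain (AltStep E K) → (inr v :: l).getLast? = some (inl f) →
      ∃ N, IsMatching E N ∧ N.card = K.card + 1
  | [], _, _, _, _, _, _, _, _, hlast => by simp at hlast
  | [inl g], K, v, f, hK, hv, hf, _, hc, hlast => by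
    obtain rfl : g = f := by simpa using hlast
    have hgv : AltStep E K (inr v) (inl g) := by simpa using hc
    exact ⟨insert (g, v) K, hK.insert_of_unmatched hgv.1 hf hv,
      Finset.card_insert_of_notMem hgv.2⟩
  | inl g :: inr w :: rest, K, v, f, hK, hv, hf, hnd, hc, hlast => by
    obtain ⟨⟨hgvE, hgvK⟩, hgw, hc⟩ : ((g, v) ∈ E ∧ (g, v) ∉ K) ∧ (g, w) ∈ K ∧
        (inr w :: rest).IsChain (AltStep E K) := by
      simpa only [isChain_cons_cons, AltStep] using hc
    rw [getLast?_cons_cons, getLast?_cons_cons] at hlast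
    have hvw : v ≠ w := by rintro rfl; simp at hnd
    have hg : inl g ∉ inr w :: rest := (nodup_cons.1 (nodup_cons.1 hnd).2).1
    have hfg : f ≠ g := by rintro rfl; exact hg (mem_of_getLast? hlast)
    -- trading `(g, w)` for `(g, v)` keeps the size and makes `w` the free start of the rest
    set K' := insert (g, v) (K.erase (g, w))
    have hK' : IsMatching E K' :=
      (hK.subset (Finset.erase_subset _ _)).insert_of_unmatched hgvE
        (hK.fUnmatched_erase hgw) fun u hu => hv u (Finset.mem_of_mem_erase hu)
    have hagree : ∀ g' u, g' ≠ g → ((g', u) ∈ K ↔ (g', u) ∈ K') := by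
      intro g' u hg'
      simp [K', hg']
    have hw : VUnmatched K' w := by
      intro u hu
      rcases Finset.mem_insert.1 hu with h | h
      · exact hvw (Prod.mk.inj h).2.symm
      · exact (Finset.mem_erase.1 h).1 (hK.2.2 _ (Finset.mem_erase.1 h).2 _ hgw rfl)
    have hf' : FUnmatched K' f := fun u hu => hf u ((hagree f u hfg).2 hu)
    have hc' : (inr w :: rest).IsChain (AltStep E K') := by
      refine hc.imp_of_mem_imp fun a b ha hb => (altStep_congr ?_).1
      rintro g' u (rfl | rfl) <;> refine hagree g' u ?_ <;> rintro rfl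
      exacts [hg ha, hg hb]
    obtain ⟨N, hN, hcard⟩ := exists_card_eq_add_one_of_altStep_chain hK' hw hf'
      ((nodup_cons.1 (nodup_cons.1 hnd).2).2) hc' hlast
    refine ⟨N, hN, ?_⟩
    rw [hcard, Finset.card_insert_of_notMem fun h => hgvK (Finset.mem_of_mem_erase h),
      Finset.card_erase_add_one hgw]
  | inr _ :: _, _, _, _, _, _, _, _, hc, _ => by simp [AltStep] at hc
  | inl _ :: inl _ :: _, _, _, _, _, _, _, _, hc, _ => by simp [AltStep] at hc

lemma inr_mem_incompleteSet_of_vUnmatched {v : V} (hv : VUnmatched M v) :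
    inr v ∈ incompleteSet E M :=
  ⟨v, hv, [inr v], ⟨cons_ne_nil _ _, nodup_singleton _, isChain_singleton _, isChain_nil⟩,
    rfl, rfl⟩

lemma IsMatching.inl_mem_incompleteSet (hM : IsMatching E M) {f : F} {v : V}
    (hv : inr v ∈ incompleteSet E M) (he : (f, v) ∈ E) : inl f ∈ incompleteSet E M := by
  by_cases hfv : (f, v) ∈ M
  · rcases eq_vUnmatched_or_exists_altStep_of_mem_incompleteSet hM.1 hv with
      ⟨w, hvw, hw⟩ | ⟨g | w, hg, hgv⟩
    · cases hvw
      exact absurd hfv (hw f)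
    · obtain rfl : g = f := congrArg Prod.fst (hM.2.2 _ hgv _ hfv rfl)
      exact hg
    · exact hgv.elim
  · exact mem_incompleteSet_of_altStep hM.1 hv ⟨he, hfv⟩

lemma IsMaxMatching.not_fUnmatched_of_inl_mem_incompleteSet (hM : IsMaxMatching E M) {f : F}
    (hf : inl f ∈ incompleteSet E M) : ¬ FUnmatched M f := by
  classical
  intro hfu
  obtain ⟨v, hv, l, hnd, hc, hlast⟩ := (mem_incompleteSet_iff hM.1.1).1 hf
  obtain ⟨N, hN, hcard⟩ := hM.1.exists_card_eq_add_one_of_altStep_chain hv hfu hnd hc hlast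
  have := hM.2 N hN
  omega

lemma IsMatching.card_image_fst [DecidableEq F] {K : Finset (F × V)} (hK : IsMatching E K) :
    (K.image Prod.fst).card = K.card :=
  Finset.card_image_of_injOn fun e he e' he' h => hK.2.1 e he e' he' h

lemma IsMatching.card_image_snd [DecidableEq V] {K : Finset (F × V)} (hK : IsMatching E K) :
    (K.image Prod.snd).card = K.card :=
  Finset.card_image_of_injOn fun e he e' he' h => hK.2.2 e he e' he' h

lemma IsMatching.card_add_card_le [Fintype V] [DecidableEq V] {K : Finset (F × V)}
    (hK : IsMatching E K) (A : Finset V) :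
    A.card + K.card ≤ Fintype.card V + (K.filter (·.2 ∈ A)).card := by
  have hA : A ⊆ (K.image Prod.snd)ᶜ ∪ (K.filter (·.2 ∈ A)).image Prod.snd := by
    intro v hv
    by_cases h : v ∈ K.image Prod.snd
    · obtain ⟨e, he, rfl⟩ := Finset.mem_image.1 h
      exact Finset.mem_union_right _ (Finset.mem_image_of_mem _ (Finset.mem_filter.2 ⟨he, hv⟩))
    · exact Finset.mem_union_left _ (Finset.mem_compl.2 h)
  have := (Finset.card_le_card hA).trans (Finset.card_union_le _ _)
  have := Finset.card_le_univ (K.image Prod.snd)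
  rw [Finset.card_compl, hK.card_image_snd] at *
  have := (Finset.card_image_le (s := K.filter (·.2 ∈ A)) (f := Prod.snd))
  omega

lemma IsMatching.card_add_card_le_of_vUnmatched [Fintype V] [DecidableEq V]
    {K : Finset (F × V)} (hK : IsMatching E K) {A : Finset V}
    (hA : ∀ v, VUnmatched K v → v ∈ A) :
    (K.filter (·.2 ∈ A)).card + Fintype.card V ≤ A.card + K.card := by
  have hKA : IsMatching E (K.filter (·.2 ∈ A)) := hK.subset (Finset.filter_subset _ _)
  have hsub : (K.image Prod.snd)ᶜ ∪ (K.filter (·.2 ∈ A)).image Prod.snd ⊆ A := by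
    refine Finset.union_subset (fun v hv => hA v fun f hf => ?_) fun v hv => ?_
    · exact Finset.mem_compl.1 hv (Finset.mem_image_of_mem Prod.snd hf)
    · obtain ⟨e, he, rfl⟩ := Finset.mem_image.1 hv
      exact (Finset.mem_filter.1 he).2
  have hdisj : Disjoint (K.image Prod.snd)ᶜ ((K.filter (·.2 ∈ A)).image Prod.snd) :=
    disjoint_compl_left.mono_right (Finset.image_subset_image (Finset.filter_subset _ _))
  have := Finset.card_le_card hsub
  have := Finset.card_le_univ (K.image Prod.snd)
  rw [Finset.card_union_of_disjoint hdisj, Finset.card_compl, hK.card_image_snd,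
    hKA.card_image_snd] at *
  omega

theorem IsMaxMatching.exists_mem_of_inl_mem_incompleteSet [Fintype F] [Fintype V]
    {M' : Finset (F × V)} (hM : IsMaxMatching E M) (hM' : IsMaxMatching E M') {f : F}
    (hf : inl f ∈ incompleteSet E M) : ∃ v, (f, v) ∈ M' ∧ inr v ∈ incompleteSet E M := by
  classical
  set A := Finset.univ.filter fun v => inr v ∈ incompleteSet E M
  set B := Finset.univ.filter fun g => inl g ∈ incompleteSet E M
  set MA := M.filter (·.2 ∈ A)
  set MA' := M'.filter (·.2 ∈ A)
  have hB : B ⊆ MA.image Prod.fst := by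
    intro g hg
    have hg : inl g ∈ incompleteSet E M := (Finset.mem_filter.1 hg).2
    obtain ⟨v, hgv⟩ : ∃ v, (g, v) ∈ M := by
      simpa [FUnmatched] using hM.not_fUnmatched_of_inl_mem_incompleteSet hg
    have hv : inr v ∈ incompleteSet E M := mem_incompleteSet_of_altStep hM.1.1 hg hgv
    exact Finset.mem_image_of_mem Prod.fst (Finset.mem_filter.2 ⟨hgv, by simpa [A] using hv⟩)
  have hB' : MA'.image Prod.fst ⊆ B := by
    intro g hg
    obtain ⟨⟨g, v⟩, he, rfl⟩ := Finset.mem_image.1 hg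
    obtain ⟨he, hv⟩ := Finset.mem_filter.1 he
    simpa [B] using hM.1.inl_mem_incompleteSet (by simpa [A] using hv) (hM'.1.1 he)
  have hcard : MA.card ≤ MA'.card := by
    have h : MA.card + Fintype.card V ≤ A.card + M.card :=
      hM.1.card_add_card_le_of_vUnmatched fun v hv => by
        simpa [A] using inr_mem_incompleteSet_of_vUnmatched hv
    have h' : A.card + M'.card ≤ Fintype.card V + MA'.card := hM'.1.card_add_card_le A
    have := le_antisymm (hM.2 M' hM'.1) (hM'.2 M hM.1)
    omega
  have hMA' : IsMatching E MA' := hM'.1.subset (Finset.filter_subset _ _)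
  have hBeq : MA'.image Prod.fst = B := by
    refine Finset.eq_of_subset_of_card_le hB' ?_
    calc B.card ≤ (MA.image Prod.fst).card := Finset.card_le_card hB
      _ ≤ MA.card := Finset.card_image_le
      _ ≤ MA'.card := hcard
      _ = (MA'.image Prod.fst).card := hMA'.card_image_fst.symm
  have hfB : f ∈ MA'.image Prod.fst := hBeq ▸ by simpa [B] using hf
  obtain ⟨⟨f, v⟩, he, rfl⟩ := Finset.mem_image.1 hfB
  obtain ⟨he, hv⟩ := Finset.mem_filter.1 he
  exact ⟨v, he, by simpa [A] using hv⟩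

def swapEdges (E : Finset (F × V)) : Finset (V × F) := E.map (Equiv.prodComm F V).toEmbedding

@[simp]
lemma mem_swapEdges {v : V} {f : F} : (v, f) ∈ swapEdges E ↔ (f, v) ∈ E := by
  simp [swapEdges, Finset.mem_map_equiv]

@[simp]
lemma swapEdges_swapEdges (E : Finset (F × V)) : swapEdges (swapEdges E) = E := by
  ext ⟨f, v⟩
  simp

@[simp]
lemma card_swapEdges (E : Finset (F × V)) : (swapEdges E).card = E.card := Finset.card_map _

lemma isMatching_swapEdges_iff {K : Finset (F × V)} :
    IsMatching (swapEdges E) (swapEdges K) ↔ IsMatching E K := by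
  simp only [IsMatching, swapEdges, Finset.map_subset_map, Finset.forall_mem_map]
  simp [Prod.ext_iff]
  grind

lemma IsMaxMatching.swapEdges (hM : IsMaxMatching E M) :
    IsMaxMatching (swapEdges E) (swapEdges M) := by
  refine ⟨isMatching_swapEdges_iff.2 hM.1, fun N hN => ?_⟩
  rw [← isMatching_swapEdges_iff, swapEdges_swapEdges] at hN
  simpa using hM.2 _ hN

@[simp]
lemma sumAdj_swapEdges {x y : F ⊕ V} : sumAdj (swapEdges E) x.swap y.swap ↔ sumAdj E x y := by
  rcases x with _ | _ <;> rcases y with _ | _ <;> simp [sumAdj]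

@[simp]
lemma pairInM_swapEdges {p : (F ⊕ V) × (F ⊕ V)} :
    pairInM (swapEdges M) (p.map Sum.swap Sum.swap) ↔ pairInM M p := by
  obtain ⟨_ | _, _ | _⟩ := p <;> simp [pairInM]

lemma isAltPath_map_swap {l : List (F ⊕ V)} :
    IsAltPath (swapEdges E) (swapEdges M) (l.map Sum.swap) ↔ IsAltPath E M l := by
  simp [isAltPath_iff, ← map_tail, zip_map, isChain_map,
    nodup_map_iff Sum.swap_leftInverse.injective]

lemma swap_mem_incompleteSet_swapEdges_iff {x : F ⊕ V} :
    x.swap ∈ incompleteSet (swapEdges E) (swapEdges M) ↔ x ∈ overcompleteSet E M := by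
  constructor
  · rintro ⟨f, hf, l, hl, hhead, hlast⟩
    refine ⟨f, fun v hv => hf v (by simpa using hv), l.map Sum.swap, ?_, ?_, ?_⟩
    · rwa [← isAltPath_map_swap, List.map_map, Sum.swap_swap_eq, map_id]
    · simp [hhead]
    · simp [hlast]
  · rintro ⟨f, hf, l, hl, hhead, hlast⟩
    exact ⟨f, fun v hv => hf v (by simpa using hv), l.map Sum.swap, isAltPath_map_swap.2 hl,
      by simp [hhead], by simp [hlast]⟩

end

/-- every maximum matching `M'` matches every vertex of `T_I ∩ F`
with a vertex of `T_I ∩ V`, and every vertex of `T_O ∩ V` with a vertex of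
`T_O ∩ F` (where `T_I`, `T_O` are taken with respect to the maximum matching `M`);
in particular, every vertex of `T_I ∩ F` and of `T_O ∩ V` is covered by every
maximum matching. -/
theorem maximum_matchings_cover_parts (E M M' : Finset (F × V))
    (hM : IsMaxMatching E M) (hM' : IsMaxMatching E M') :
    (∀ f : F, Sum.inl f ∈ incompleteSet E M →
      ∃ v : V, (f, v) ∈ M' ∧ Sum.inr v ∈ incompleteSet E M) ∧
    (∀ v : V, Sum.inr v ∈ overcompleteSet E M →
      ∃ f : F, (f, v) ∈ M' ∧ Sum.inl f ∈ overcompleteSet E M) := by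
  refine ⟨fun f hf => hM.exists_mem_of_inl_mem_incompleteSet hM' hf, fun v hv => ?_⟩
  obtain ⟨f, hvf, hf⟩ := hM.swapEdges.exists_mem_of_inl_mem_incompleteSet hM'.swapEdges
    (swap_mem_incompleteSet_swapEdges_iff.2 hv)
  exact ⟨f, mem_swapEdges.1 hvf, swap_mem_incompleteSet_swapEdges_iff.1 hf⟩
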